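/- (Fused Zamolodchikov–Faddeev relation.) Let I ≥ 1 be an integer and 0 < q < 1. For all x, y ∈ ℂ \ {0} such that (x/y)·q^m ≠ 1 for every integer m with −I ≤ m ≤ I, and all integers 0 ≤ c, d ≤ I, the following identity holds in A: M^I_c(y) · M^I_d(x) = Σ_{a,b=0}^{I} R^I(x/y)_{b,a}^{d,c} · M^I_b(x) · M^I_a(y). -/

import Mathlib

open scoped Matrix ComplexOrder

noncomputable section

/-- Entries `R(u)_{a,b}^{c,d}` of the unfused stochastic six-vertex `R`-matrix. -/
def Rent (q u : ℂ) (a b c d : Fin 2) : ℂ :=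
  if a = 0 ∧ b = 0 ∧ c = 0 ∧ d = 0 then 1
  else if a = 1 ∧ b = 1 ∧ c = 1 ∧ d = 1 then 1
  else if a = 0 ∧ b = 1 ∧ c = 0 ∧ d = 1 then q * (1 - u) / (1 - q * u)
  else if a = 0 ∧ b = 1 ∧ c = 1 ∧ d = 0 then (1 - q) / (1 - q * u)
  else if a = 1 ∧ b = 0 ∧ c = 0 ∧ d = 1 then u * (1 - q) / (1 - q * u)
  else if a = 1 ∧ b = 0 ∧ c = 1 ∧ d = 0 then (1 - u) / (1 - q * u)
  else 0

/-- The unfused `R`-matrix as an operator (matrix) on `ℂ² ⊗ ℂ²`;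
row index `(c,d)` (output), column index `(a,b)` (input), so that
`R(u)(e_a ⊗ e_b) = Σ_{c,d} R(u)_{a,b}^{c,d} e_c ⊗ e_d`. -/
def Rmat (q u : ℂ) : Matrix (Fin 2 × Fin 2) (Fin 2 × Fin 2) ℂ :=
  fun cd ab => Rent q u ab.1 ab.2 cd.1 cd.2

/-- Entries `K(u)_a^d` of the unfused boundary `K`-matrix, parameters `fa = 𝔞`, `fc = 𝔠`. -/
def Kent (fa fc u : ℂ) (a d : Fin 2) : ℂ :=
  if a = 0 ∧ d = 0 then ((fc - fa) * u ^ 2 + u) / (fc * u ^ 2 + u - fa)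
  else if a = 0 ∧ d = 1 then fa * (u ^ 2 - 1) / (fc * u ^ 2 + u - fa)
  else if a = 1 ∧ d = 0 then fc * (u ^ 2 - 1) / (fc * u ^ 2 + u - fa)
  else (fc - fa + u) / (fc * u ^ 2 + u - fa)

/-- The unfused `K`-matrix as an operator on `ℂ²`: row `d` (output), column `a` (input). -/
def Kmat (fa fc u : ℂ) : Matrix (Fin 2) (Fin 2) ℂ := fun d a => Kent fa fc u a d

/-- Entries `K̄(u)_b^c` of the unfused boundary `K̄`-matrix, parameters `fb = 𝔟`, `fd = 𝔡`. -/
def Kbent (fb fd u : ℂ) (b c : Fin 2) : ℂ :=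
  if b = 0 ∧ c = 0 then ((fb - fd) * u ^ 2 - u) / (fb * u ^ 2 - u - fd)
  else if b = 0 ∧ c = 1 then fd * (u ^ 2 - 1) / (fb * u ^ 2 - u - fd)
  else if b = 1 ∧ c = 0 then fb * (u ^ 2 - 1) / (fb * u ^ 2 - u - fd)
  else (fb - fd - u) / (fb * u ^ 2 - u - fd)

/-- The operator `P` on `ℂ² ⊗ ℂ²` swapping the two tensor factors. -/
def swapMat : Matrix (Fin 2 × Fin 2) (Fin 2 × Fin 2) ℂ :=
  fun p r => if p.1 = r.2 ∧ p.2 = r.1 then 1 else 0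

/-- `Ř(u) = P ∘ R(u)`. -/
def RcheckMat (q u : ℂ) : Matrix (Fin 2 × Fin 2) (Fin 2 × Fin 2) ℂ := swapMat * Rmat q u

/-- A two-site operator `T` placed at sites `i, j` of an `n`-fold tensor power of `ℂ²`,
acting as the identity on the other factors.  Here `(ℂ²)^{⊗n}` is identified with the
function space `(Fin n → Fin 2) → ℂ` with its standard basis. -/
def emb2 {n : ℕ} (i j : Fin n) (T : Matrix (Fin 2 × Fin 2) (Fin 2 × Fin 2) ℂ) :
    Matrix (Fin n → Fin 2) (Fin n → Fin 2) ℂ :=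
  fun x y => T (x i, x j) (y i, y j) * (if ∀ k, k ≠ i → k ≠ j → x k = y k then 1 else 0)

/-- A one-site operator `T` placed at site `i` of an `n`-fold tensor power of `ℂ²`. -/
def emb1 {n : ℕ} (i : Fin n) (T : Matrix (Fin 2) (Fin 2) ℂ) :
    Matrix (Fin n → Fin 2) (Fin n → Fin 2) ℂ :=
  fun x y => T (x i) (y i) * (if ∀ k, k ≠ i → x k = y k then 1 else 0)

/-- The permutation operator `P_ω` on `(ℂ²)^{⊗n}`: it puts the `k`-th factor in position `ω(k)`. -/
def permMat (n : ℕ) (ω : Equiv.Perm (Fin n)) :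
    Matrix (Fin n → Fin 2) (Fin n → Fin 2) ℂ :=
  fun x y => if (fun k => x (ω k)) = y then 1 else 0

/-- `inv(a)` : the number of inversions of a `{0,1}`-word. -/
def invCount {I : ℕ} (x : Fin I → Fin 2) : ℕ :=
  (Finset.univ.filter (fun p : Fin I × Fin I => p.1 < p.2 ∧ x p.2 < x p.1)).card

/-- `Z_q(I;m)`. -/
def Zq (I : ℕ) (q : ℂ) (m : ℕ) : ℂ :=
  ∑ x ∈ Finset.univ.filter (fun x : Fin I → Fin 2 => (∑ j, ((x j : ℕ))) = m),
    q ^ invCount x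

/-- The projection `Π : (ℂ²)^{⊗I} → ℂ^{I+1}`, `e_{a₁…a_I} ↦ e_{Σ a_j}`. -/
def PiMat (I : ℕ) : Matrix (Fin (I + 1)) (Fin I → Fin 2) ℂ :=
  fun m x => if (∑ j, ((x j : ℕ))) = (m : ℕ) then 1 else 0

/-- The injection `Π̂ : ℂ^{I+1} → (ℂ²)^{⊗I}`. -/
def hatPiMat (I : ℕ) (q : ℂ) : Matrix (Fin I → Fin 2) (Fin (I + 1)) ℂ :=
  fun x m => if (∑ j, ((x j : ℕ))) = (m : ℕ) then q ^ invCount x / Zq I q (m : ℕ) else 0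

/-- `F = Π̂ ∘ Π`, the projector onto the `q`-exchangeable subspace. -/
def Fmat (I : ℕ) (q : ℂ) : Matrix (Fin I → Fin 2) (Fin I → Fin 2) ℂ :=
  hatPiMat I q * PiMat I

/-- Restriction of a configuration on `2I` sites to the first `I` sites. -/
def firstHalf {I : ℕ} (x : Fin (2 * I) → Fin 2) : Fin I → Fin 2 :=
  fun k => x ⟨k.1, by have := k.isLt; omega⟩

/-- Restriction of a configuration on `2I` sites to the last `I` sites. -/
def secondHalf {I : ℕ} (x : Fin (2 * I) → Fin 2) : Fin I → Fin 2 :=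
  fun k => x ⟨k.1 + I, by have := k.isLt; omega⟩

/-- `F ⊗ F` acting on `(ℂ²)^{⊗2I}`. -/
def FFmat (I : ℕ) (q : ℂ) : Matrix (Fin (2 * I) → Fin 2) (Fin (2 * I) → Fin 2) ℂ :=
  fun x y => Fmat I q (firstHalf x) (firstHalf y) * Fmat I q (secondHalf x) (secondHalf y)

/-- `Π ⊗ Π : (ℂ²)^{⊗2I} → ℂ^{I+1} ⊗ ℂ^{I+1}`. -/
def PiPiMat (I : ℕ) : Matrix (Fin (I + 1) × Fin (I + 1)) (Fin (2 * I) → Fin 2) ℂ :=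
  fun p x => PiMat I p.1 (firstHalf x) * PiMat I p.2 (secondHalf x)

/-- `Π̂ ⊗ Π̂ : ℂ^{I+1} ⊗ ℂ^{I+1} → (ℂ²)^{⊗2I}`. -/
def hatPiPiMat (I : ℕ) (q : ℂ) : Matrix (Fin (2 * I) → Fin 2) (Fin (I + 1) × Fin (I + 1)) ℂ :=
  fun x p => hatPiMat I q (firstHalf x) p.1 * hatPiMat I q (secondHalf x) p.2

/-- The fused bulk operator `R̊^I(u)` on `(ℂ²)^{⊗2I}` : the ordered product (composition,
factors written from left to right) over `a = I, I-1, …, 1` and, inside, `b = 1, 2, …, I`,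
of the operators `R(u q^{b-a})_{b, a+I}` (sites are 1-based; here `a = I - a'`, `b = b' + 1`). -/
def Rring (I : ℕ) (q u : ℂ) : Matrix (Fin (2 * I) → Fin 2) (Fin (2 * I) → Fin 2) ℂ :=
  ((List.finRange I).map (fun a' =>
    ((List.finRange I).map (fun b' =>
      emb2 (⟨b'.1, by have := b'.isLt; omega⟩ : Fin (2 * I))
        ⟨2 * I - 1 - a'.1, by have := a'.isLt; omega⟩
        (Rmat q (u * q ^ (((b'.1 : ℤ) + 1) - ((I : ℤ) - (a'.1 : ℤ))))))).prod)).prod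

/-- The fused `R`-matrix `R^I(u) = (Π⊗Π) ∘ R̊^I(u) ∘ (Π̂⊗Π̂)` on `ℂ^{I+1} ⊗ ℂ^{I+1}`;
its entry at row `(c,d)`, column `(a,b)` is `R^I(u)_{a,b}^{c,d}`. -/
def RI (I : ℕ) (q u : ℂ) :
    Matrix (Fin (I + 1) × Fin (I + 1)) (Fin (I + 1) × Fin (I + 1)) ℂ :=
  PiPiMat I * Rring I q u * hatPiPiMat I q

/-- Real powers of a positive real number, viewed in `ℂ`. -/
def qrpow (q : ℝ) (r : ℝ) : ℂ := ((q ^ r : ℝ) : ℂ)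

/-- The fused boundary operator `K̊^I(u)` on `(ℂ²)^{⊗I}` : `P_rev` composed with the ordered
product over `a = I, …, 1` of `K(u q^{(I+1)/2-a})_a` composed with the ordered product over
`b = a-1, …, 1` of `R(u² q^{I+1-a-b})_{b,a}` (sites 1-based; `a = I - a'`, `b = a - 1 - b'`). -/
def Kring (I : ℕ) (q : ℝ) (fa fc : ℂ) (u : ℂ) :
    Matrix (Fin I → Fin 2) (Fin I → Fin 2) ℂ :=
  permMat I (Fin.revPerm) *
  ((List.finRange I).map (fun a' =>
    emb1 (⟨I - 1 - a'.1, by have := a'.isLt; omega⟩ : Fin I)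
        (Kmat fa fc (u * qrpow q (((I : ℝ) + 1) / 2 - ((I : ℝ) - (a'.1 : ℝ))))) *
    ((List.finRange (I - 1 - a'.1)).map (fun b' =>
      emb2 (⟨I - a'.1 - 2 - b'.1, by have := a'.isLt; have := b'.isLt; omega⟩ : Fin I)
        ⟨I - 1 - a'.1, by have := a'.isLt; omega⟩
        (Rmat (q : ℂ)
          (u ^ 2 * (q : ℂ) ^ (((I : ℤ) + 1) - ((I : ℤ) - (a'.1 : ℤ)) -
            ((I : ℤ) - (a'.1 : ℤ) - 1 - (b'.1 : ℤ))))))).prod)).prod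

/-- The fused `K`-matrix `K^I(u) = Π ∘ K̊^I(u) ∘ Π̂` on `ℂ^{I+1}`;
its entry at row `d`, column `a` is `K^I(u)_a^d`. -/
def KI (I : ℕ) (q : ℝ) (fa fc u : ℂ) : Matrix (Fin (I + 1)) (Fin (I + 1)) ℂ :=
  PiMat I * Kring I q fa fc u * hatPiMat I (q : ℂ)

/-- `M₀(u) = u·1 + 𝐞`, `M₁(u) = u⁻¹·1 + 𝐝` in a ℂ-algebra `A`. -/
def Mop {A : Type*} [Ring A] [Algebra ℂ A] (dd ee : A) (i : Fin 2) (u : ℂ) : A :=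
  if i = 0 then algebraMap ℂ A u + ee else algebraMap ℂ A u⁻¹ + dd

/-- The fused elements `M^I_ζ(u)`. -/
def MIop {A : Type*} [Ring A] [Algebra ℂ A] (dd ee : A) (I : ℕ) (q : ℝ) (ζ : ℕ) (u : ℂ) : A :=
  ∑ z ∈ Finset.univ.filter (fun z : Fin I → Fin 2 => (∑ j, ((z j : ℕ))) = ζ),
    ((List.finRange I).map (fun a =>
      Mop dd ee (z a) (u * qrpow q (((a.1 : ℝ) + 1) - ((I : ℝ) + 1) / 2)))).prod

end

/-! Both sides are read off from products of `2I` unfused operators `M_a(·)`: site `k` of the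
left half carries the point `x q^{k+1-(I+1)/2}`, site `k` of the right half `y q^{k+1-(I+1)/2}`.
Applying `Π ⊗ Π` to the product in which the right half stands first gives `M^I_c(y) M^I_d(x)`.
Moving each right site past each left site is one unfused exchange relation, with spectral
parameter `x/y · q^{k-l}` (`hreg` keeps its denominators nonzero), and the `I²` exchanges compose
to `R̊^I(x/y)`. Finally `M₁(v) M₀(qv) = q M₀(v) M₁(qv)` makes a word product depend on its word
only through `q^{inv}` and the weight, so the product with the left half first is `Π̂ ⊗ Π̂`
applied to the products `M^I_b(x) M^I_a(y)`; composing the three operators gives `R^I(x/y)`. -/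

open Finset Function

section WordProd

variable {M : Type*} [Monoid M] {n : ℕ}

def wordProd (m : Fin n → Fin 2 → M) (L : List (Fin n)) (w : Fin n → Fin 2) : M :=
  (L.map fun s => m s (w s)).prod

variable (m : Fin n → Fin 2 → M)

lemma wordProd_append (L L' : List (Fin n)) (w : Fin n → Fin 2) :
    wordProd m (L ++ L') w = wordProd m L w * wordProd m L' w := by
  simp [wordProd]

lemma wordProd_cons (s : Fin n) (L : List (Fin n)) (w : Fin n → Fin 2) :
    wordProd m (s :: L) w = m s (w s) * wordProd m L w := by
  simp [wordProd]

lemma wordProd_congr {L : List (Fin n)} {w w' : Fin n → Fin 2} (h : ∀ s ∈ L, w s = w' s) :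
    wordProd m L w = wordProd m L w' :=
  congrArg List.prod (List.map_congr_left fun s hs => by rw [h s hs])

lemma wordProd_update_pair {Al Bl : List (Fin n)} {i j : Fin n}
    (hnd : (Al ++ i :: j :: Bl).Nodup) (w : Fin n → Fin 2) (a b : Fin 2) :
    wordProd m (Al ++ i :: j :: Bl) (update (update w i a) j b) =
      wordProd m Al w * (m i a * m j b) * wordProd m Bl w := by
  simp only [List.nodup_append, List.nodup_cons, List.mem_cons, not_or] at hnd
  obtain ⟨-, ⟨⟨hij, hiBl⟩, hjBl, -⟩, hAl⟩ := hnd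
  have hoff : ∀ s, s ≠ i → s ≠ j → update (update w i a) j b s = w s := fun s hi hj => by
    rw [update_of_ne hj, update_of_ne hi]
  rw [wordProd_append, wordProd_cons, wordProd_cons, update_of_ne hij, update_self, update_self,
    wordProd_congr m (fun s hs => hoff s (hAl s hs i (by simp)) (hAl s hs j (by simp))),
    wordProd_congr m (L := Bl) (fun s hs => hoff s (by rintro rfl; exact hiBl hs)
      (by rintro rfl; exact hjBl hs))]
  simp only [mul_assoc]

lemma wordProd_comp_swap {Al Bl : List (Fin n)} {i j : Fin n} (hnd : (Al ++ i :: j :: Bl).Nodup)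
    (z : Fin n → Fin 2) :
    wordProd m (Al ++ i :: j :: Bl) (z ∘ Equiv.swap i j) =
      wordProd m Al z * (m i (z j) * m j (z i)) * wordProd m Bl z := by
  rw [Equiv.swap_comm, Equiv.comp_swap_eq_update, wordProd_update_pair m hnd]

lemma wordProd_map {n' : ℕ} (f : Fin n' → Fin n) (L : List (Fin n')) (w : Fin n → Fin 2) :
    wordProd m (L.map f) w = wordProd (fun k => m (f k)) L (w ∘ f) := by
  simp only [wordProd, List.map_map]
  rfl

end WordProd

section Exchange

variable {A : Type*} [Ring A] [Algebra ℂ A]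

lemma mulVec_map_algebraMap_apply {m n : Type*} [Fintype n] (M : Matrix m n ℂ) (v : n → A)
    (i : m) : (M.map (algebraMap ℂ A) *ᵥ v) i = ∑ j, M i j • v j := by
  simp only [Matrix.mulVec, dotProduct, Matrix.map_apply, Algebra.smul_def]

def ZFRelation {ι : Type*} [Fintype ι] (T : Matrix (ι × ι) (ι × ι) ℂ) (f g : ι → A) : Prop :=
  ∀ c d, g c * f d = ∑ a, ∑ b, T (d, c) (b, a) • (f b * g a)

variable {n : ℕ}

lemma sum_emb2_smul {x y : Fin n} (hxy : x ≠ y) (T : Matrix (Fin 2 × Fin 2) (Fin 2 × Fin 2) ℂ)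
    (w : Fin n → Fin 2) (F : (Fin n → Fin 2) → A) :
    ∑ w', emb2 x y T w w' • F w' =
      ∑ p : Fin 2 × Fin 2, T (w x, w y) p • F (update (update w x p.1) y p.2) := by
  have hx : ∀ p : Fin 2 × Fin 2, update (update w x p.1) y p.2 x = p.1 := fun p => by
    rw [update_of_ne hxy, update_self]
  refine (Fintype.sum_of_injective (fun p : Fin 2 × Fin 2 => update (update w x p.1) y p.2)
    (fun p p' h => Prod.ext (by simpa [hx] using congrFun h x) (by simpa using congrFun h y))
    _ _ (fun w' hw' => ?_) (fun p => ?_)).symm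
  · rw [emb2, if_neg, mul_zero, zero_smul]
    refine fun hagree => hw' ⟨(w' x, w' y), funext fun k => ?_⟩
    by_cases hky : k = y
    · subst hky; simp
    by_cases hkx : k = x
    · subst hkx; exact hx _
    simp [update_of_ne hky, update_of_ne hkx, hagree k hkx hky]
  · rw [emb2, if_pos fun k hkx hky => by rw [update_of_ne hky, update_of_ne hkx], mul_one, hx,
      update_self]

variable (m : Fin n → Fin 2 → A)

lemma mulVec_emb2_wordProd {x y : Fin n} {T : Matrix (Fin 2 × Fin 2) (Fin 2 × Fin 2) ℂ}
    (hT : ZFRelation T (m x) (m y)) {Al Bl : List (Fin n)} (hnd : (Al ++ x :: y :: Bl).Nodup) :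
    (emb2 x y T).map (algebraMap ℂ A) *ᵥ wordProd m (Al ++ x :: y :: Bl) =
      wordProd m (Al ++ y :: x :: Bl) := by
  have hxy : x ≠ y := by rintro rfl; simp [List.nodup_append] at hnd
  funext w
  rw [mulVec_map_algebraMap_apply, sum_emb2_smul hxy]
  simp only [wordProd_update_pair m hnd, wordProd_append, wordProd_cons, ← mul_assoc,
    Fintype.sum_prod_type]
  rw [mul_assoc (wordProd m Al w), hT, sum_comm]
  simp only [mul_sum, sum_mul, mul_smul_comm, smul_mul_assoc, mul_assoc]

lemma mulVec_prod_emb2_wordProd (T : Fin n → Matrix (Fin 2 × Fin 2) (Fin 2 × Fin 2) ℂ)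
    (y : Fin n) (X : List (Fin n)) (hT : ∀ x ∈ X, ZFRelation (T x) (m x) (m y))
    (Al Bl : List (Fin n)) (hnd : (Al ++ X ++ y :: Bl).Nodup) :
    (X.map fun x => emb2 x y (T x)).prod.map (algebraMap ℂ A) *ᵥ wordProd m (Al ++ X ++ y :: Bl) =
      wordProd m (Al ++ y :: X ++ Bl) := by
  induction X generalizing Al with
  | nil => simp
  | cons x X ih =>
    have hnd' : (Al ++ x :: y :: (X ++ Bl)).Nodup :=
      hnd.perm (by simpa using ((List.perm_middle.symm.cons x).append_left Al).symm)
    rw [List.map_cons, List.prod_cons, Matrix.map_mul, ← Matrix.mulVec_mulVec,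
      show Al ++ x :: X ++ y :: Bl = Al ++ [x] ++ X ++ y :: Bl by simp,
      ih (fun x' hx' => hT x' (List.mem_cons_of_mem x hx')) _ (by simpa using hnd)]
    simpa using mulVec_emb2_wordProd m (hT x List.mem_cons_self) hnd'

lemma mulVec_prod_prod_emb2_wordProd (T : Fin n → Fin n → Matrix (Fin 2 × Fin 2) (Fin 2 × Fin 2) ℂ)
    (X Y : List (Fin n)) (hT : ∀ x ∈ X, ∀ y ∈ Y, ZFRelation (T x y) (m x) (m y))
    (Al : List (Fin n)) (hnd : (Al ++ X ++ Y).Nodup) :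
    (Y.reverse.map fun y => (X.map fun x => emb2 x y (T x y)).prod).prod.map (algebraMap ℂ A) *ᵥ
      wordProd m (Al ++ X ++ Y) = wordProd m (Al ++ Y ++ X) := by
  induction Y generalizing Al with
  | nil => simp
  | cons y Y ih =>
    rw [List.reverse_cons, List.map_append, List.prod_append, List.map_singleton,
      List.prod_singleton, Matrix.map_mul, ← Matrix.mulVec_mulVec,
      mulVec_prod_emb2_wordProd m (T · y) y X (fun x hx => hT x hx y List.mem_cons_self) Al Y hnd,
      show Al ++ y :: X ++ Y = Al ++ [y] ++ X ++ Y by simp,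
      ih (fun x hx y' hy' => hT x hx y' (List.mem_cons_of_mem y hy')) _
        (hnd.perm (by simpa using List.perm_middle.append_left Al))]
    simp

end Exchange

section SingleSite

variable {A : Type*} [Ring A] [Algebra ℂ A] {dd ee : A} {q : ℂ}

lemma zfRelation_Mop (hde : dd * ee - q • (ee * dd) = (1 - q) • (1 : A)) {u v w : ℂ}
    (hv : v ≠ 0) (hw : w ≠ 0) (huv : w = u * v) (hu : 1 - q * u ≠ 0) :
    ZFRelation (Rmat q u) (Mop dd ee · w) (Mop dd ee · v) := by
  have hde' : dd * ee = q • (ee * dd) + (1 - q) • (1 : A) := by rw [← hde]; abel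
  have hu' : 1 - u * q ≠ 0 := by rwa [mul_comm]
  subst huv
  have hu0 : u ≠ 0 := left_ne_zero_of_mul hw
  intro c d
  fin_cases c <;> fin_cases d <;>
    simp only [Mop, Rmat, Rent, Fin.sum_univ_two, Fin.isValue, Fin.zero_eta, Fin.mk_one,
      one_ne_zero, zero_ne_one, reduceIte, and_true, and_false, true_and, false_and, and_self,
      Algebra.algebraMap_eq_smul_one, zero_smul, add_zero, zero_add] <;>
    simp only [mul_add, add_mul, smul_mul_assoc, mul_smul_comm, mul_one, one_mul, hde'] <;>
    match_scalars <;> field_simp <;> ring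

lemma Mop_one_mul_Mop_zero (hde : dd * ee - q • (ee * dd) = (1 - q) • (1 : A)) {v : ℂ}
    (hv : v ≠ 0) (hq : q ≠ 0) :
    Mop dd ee 1 v * Mop dd ee 0 (q * v) = q • (Mop dd ee 0 v * Mop dd ee 1 (q * v)) := by
  have hde' : dd * ee = q • (ee * dd) + (1 - q) • (1 : A) := by rw [← hde]; abel
  simp only [Mop, Fin.isValue, one_ne_zero, reduceIte, Algebra.algebraMap_eq_smul_one]
  simp only [mul_add, add_mul, smul_mul_assoc, mul_smul_comm, mul_one, one_mul, hde', smul_add]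
  match_scalars <;> field_simp
  ring

end SingleSite

section Words

variable {I : ℕ}

lemma sum_val_eq_card_filter (z : Fin I → Fin 2) :
    ∑ j, (z j : ℕ) = #(univ.filter fun j => z j = 1) := by
  rw [card_filter]
  exact sum_congr rfl fun j _ => by generalize z j = t; fin_cases t <;> rfl

lemma sum_val_le (z : Fin I → Fin 2) : ∑ j, (z j : ℕ) ≤ I :=
  (sum_le_sum fun j _ => Nat.lt_succ_iff.1 (z j).isLt).trans_eq (by simp)

lemma eq_of_monotone_of_sum_val_eq {z z' : Fin I → Fin 2} (hz : Monotone z) (hz' : Monotone z')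
    (h : ∑ j, (z j : ℕ) = ∑ j, (z' j : ℕ)) : z = z' := by
  have upper : ∀ {z : Fin I → Fin 2}, Monotone z →
      IsUpperSet (↑(univ.filter fun j => z j = 1) : Set (Fin I)) := fun hz a b hab ha => by
    simp only [coe_filter, mem_univ, true_and, Set.mem_ofPred_eq] at ha ⊢
    have := hz hab
    omega
  rw [sum_val_eq_card_filter, sum_val_eq_card_filter] at h
  have hones : univ.filter (fun j => z j = 1) = univ.filter fun j => z' j = 1 := by
    rcases (upper hz).total (upper hz') with hs | hs
    · exact eq_of_subset_of_card_le (coe_subset.1 hs) h.ge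
    · exact (eq_of_subset_of_card_le (coe_subset.1 hs) h.le).symm
  funext k
  have := congrArg (k ∈ ·) hones
  simp only [mem_filter, mem_univ, true_and, eq_iff_iff] at this
  omega

lemma exists_descent_of_not_monotone {z : Fin I → Fin 2} (hz : ¬Monotone z) :
    ∃ i j : Fin I, (j : ℕ) = i + 1 ∧ z i = 1 ∧ z j = 0 := by
  obtain _ | n := I
  · exact absurd (fun a => a.elim0) hz
  obtain ⟨i, hi⟩ := not_forall.1 (mt Fin.monotone_iff_le_succ.2 hz)
  exact ⟨i.castSucc, i.succ, rfl, by omega, by omega⟩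

lemma invCount_comp_swap {z : Fin I → Fin 2} {i j : Fin I} (hij : (j : ℕ) = i + 1)
    (hi : z i = 1) (hj : z j = 0) : invCount z = invCount (z ∘ Equiv.swap i j) + 1 := by
  have hσ : ∀ k : Fin I, (Equiv.swap i j k : ℕ) =
      if (k : ℕ) = i then (j : ℕ) else if (k : ℕ) = j then (i : ℕ) else k := fun k => by
    rw [Equiv.swap_apply_def]
    simp only [Fin.ext_iff]
    split_ifs <;> rfl
  have hinv := congrArg card (show
      (univ.filter fun p : Fin I × Fin I => p.1 < p.2 ∧ (z ∘ Equiv.swap i j) p.2 <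
        (z ∘ Equiv.swap i j) p.1).map ((Equiv.swap i j).prodCongr (Equiv.swap i j)).toEmbedding =
      (univ.filter fun p : Fin I × Fin I => p.1 < p.2 ∧ z p.2 < z p.1).erase (i, j) by
    ext ⟨c, d⟩
    simp only [mem_map_equiv, Equiv.prodCongr_symm, Equiv.symm_swap, Equiv.prodCongr_apply,
      Prod.map, mem_filter, mem_univ, true_and, comp_apply, Equiv.swap_apply_self,
      mem_erase, ne_eq, Prod.mk.injEq]
    by_cases hzcd : z d < z c
    · have hji : ¬((c : ℕ) = j ∧ (d : ℕ) = i) := by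
        rintro ⟨hc, hd⟩
        rw [Fin.ext hc, Fin.ext hd, hi, hj] at hzcd
        exact absurd hzcd (by decide)
      simp only [hzcd, and_true, Fin.lt_def, Fin.ext_iff, hσ]
      split_ifs <;> omega
    · simp [hzcd])
  have hmem : (i, j) ∈ univ.filter fun p : Fin I × Fin I => p.1 < p.2 ∧ z p.2 < z p.1 := by
    simp only [mem_filter, mem_univ, true_and, hi, hj]
    exact ⟨Fin.lt_def.2 (by omega), by decide⟩
  rw [card_map, card_erase_of_mem hmem] at hinv
  have := card_pos.2 ⟨_, hmem⟩
  unfold invCount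
  omega

end Words

lemma List.finRange_eq_append_cons_cons {I : ℕ} {i j : Fin I} (hij : (j : ℕ) = i + 1) :
    ∃ Al Bl, List.finRange I = Al ++ i :: j :: Bl := by
  refine ⟨(List.finRange I).take i, (List.finRange I).drop (j + 1), ?_⟩
  conv_lhs => rw [← List.take_append_drop i (List.finRange I),
    List.drop_eq_getElem_cons (by simp), List.drop_eq_getElem_cons (by simp; omega)]
  simp [hij, Fin.ext_iff]

section Fusion

variable {A : Type*} [Ring A] [Algebra ℂ A] {dd ee : A} {I : ℕ} {q : ℝ}

noncomputable def sitePoint (I : ℕ) (q : ℝ) (u : ℂ) (k : Fin I) : ℂ :=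
  u * qrpow q (((k.1 : ℝ) + 1) - ((I : ℝ) + 1) / 2)

variable (dd ee) in
noncomputable def siteOps (I : ℕ) (q : ℝ) (u : ℂ) (k : Fin I) (c : Fin 2) : A :=
  Mop dd ee c (sitePoint I q u k)

lemma MIop_eq_sum_filter (ζ : ℕ) (u : ℂ) :
    MIop dd ee I q ζ u = ∑ z ∈ univ.filter (fun z : Fin I → Fin 2 => ∑ j, (z j : ℕ) = ζ),
      wordProd (siteOps dd ee I q u) (List.finRange I) z :=
  rfl

lemma MIop_eq_sum_PiMat (ζ : Fin (I + 1)) (u : ℂ) :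
    MIop dd ee I q ζ u = ∑ z, PiMat I ζ z • wordProd (siteOps dd ee I q u) (List.finRange I) z := by
  simp only [MIop_eq_sum_filter, PiMat, ite_smul, one_smul, zero_smul, sum_ite, sum_const_zero,
    add_zero]

lemma sitePoint_ne_zero (hq0 : 0 < q) {u : ℂ} (hu : u ≠ 0) (k : Fin I) : sitePoint I q u k ≠ 0 :=
  mul_ne_zero hu (Complex.ofReal_ne_zero.2 (Real.rpow_pos_of_pos hq0 _).ne')

lemma sitePoint_eq_mul (hq0 : 0 < q) (u : ℂ) {v : ℂ} (hv : v ≠ 0) (k l : Fin I) :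
    sitePoint I q u k = (u / v * (q : ℂ) ^ ((k : ℤ) - l)) * sitePoint I q v l := by
  have hk : ((k : ℝ) + 1) - ((I : ℝ) + 1) / 2 =
      (((l : ℝ) + 1) - ((I : ℝ) + 1) / 2) + (((k : ℤ) - l : ℤ) : ℝ) := by push_cast; ring
  rw [sitePoint, sitePoint, hk, qrpow, Real.rpow_add hq0, Real.rpow_intCast, qrpow]
  push_cast
  field_simp

variable (hq0 : 0 < q) (hde : dd * ee - (q : ℂ) • (ee * dd) = (1 - (q : ℂ)) • (1 : A))
include hq0 hde

lemma wordProd_siteOps_comp_swap {u : ℂ} (hu : u ≠ 0) {z : Fin I → Fin 2} {i j : Fin I}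
    (hij : (j : ℕ) = i + 1) (hi : z i = 1) (hj : z j = 0) :
    wordProd (siteOps dd ee I q u) (List.finRange I) z =
      (q : ℂ) • wordProd (siteOps dd ee I q u) (List.finRange I) (z ∘ Equiv.swap i j) := by
  obtain ⟨Al, Bl, hL⟩ := List.finRange_eq_append_cons_cons hij
  have hnd := hL ▸ List.nodup_finRange I
  have hji : sitePoint I q u j = q * sitePoint I q u i := by
    rw [sitePoint_eq_mul hq0 u hu j i, div_self hu, one_mul, hij]
    push_cast
    rw [add_sub_cancel_left, zpow_one]
  rw [hL, wordProd_comp_swap _ hnd, wordProd_append, wordProd_cons, wordProd_cons]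
  simp only [siteOps, hi, hj, hji, ← mul_assoc]
  rw [mul_assoc _ (Mop dd ee 1 _), Mop_one_mul_Mop_zero hde (sitePoint_ne_zero hq0 hu i)
    (Complex.ofReal_ne_zero.2 hq0.ne')]
  simp only [mul_smul_comm, smul_mul_assoc, mul_assoc]

lemma smul_wordProd_siteOps_eq {u : ℂ} (hu : u ≠ 0) {z z' : Fin I → Fin 2}
    (h : ∑ j, (z j : ℕ) = ∑ j, (z' j : ℕ)) :
    (q : ℂ) ^ invCount z' • wordProd (siteOps dd ee I q u) (List.finRange I) z =
      (q : ℂ) ^ invCount z • wordProd (siteOps dd ee I q u) (List.finRange I) z' := by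
  induction hN : invCount z + invCount z' using Nat.strong_induction_on generalizing z z' with
  | _ N ih =>
  -- bubble sort: swapping a descent `1 0 ↦ 0 1` costs one inversion and a factor `q`
  have reduce : ∀ z₀ z₁ : Fin I → Fin 2, invCount z₀ + invCount z₁ = N →
      ∑ j, (z₀ j : ℕ) = ∑ j, (z₁ j : ℕ) → ¬Monotone z₀ →
      (q : ℂ) ^ invCount z₁ • wordProd (siteOps dd ee I q u) (List.finRange I) z₀ =
        (q : ℂ) ^ invCount z₀ • wordProd (siteOps dd ee I q u) (List.finRange I) z₁ := by
    intro z₀ z₁ hN₀ h₀ hmono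
    obtain ⟨i, j, hij, hi, hj⟩ := exists_descent_of_not_monotone hmono
    have hinv := invCount_comp_swap hij hi hj
    have hsum : ∑ k, ((z₀ ∘ Equiv.swap i j) k : ℕ) = ∑ k, (z₁ k : ℕ) :=
      (Equiv.sum_comp (Equiv.swap i j) (fun k => (z₀ k : ℕ))).trans h₀
    rw [wordProd_siteOps_comp_swap hq0 hde hu hij hi hj, smul_comm, ih _ (by omega) hsum rfl,
      smul_smul, hinv, pow_succ']
  by_cases hz : Monotone z
  · by_cases hz' : Monotone z'
    · rw [eq_of_monotone_of_sum_val_eq hz hz' h]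
    · exact (reduce z' z (by omega) h.symm hz').symm
  · exact reduce z z' hN h hz

lemma wordProd_siteOps_eq_sum_hatPiMat {u : ℂ} (hu : u ≠ 0) (z : Fin I → Fin 2) :
    wordProd (siteOps dd ee I q u) (List.finRange I) z =
      ∑ b, hatPiMat I q z b • MIop dd ee I q b u := by
  set b₀ : Fin (I + 1) := ⟨∑ j, (z j : ℕ), Nat.lt_succ_of_le (sum_val_le z)⟩
  have hZ : Zq I q b₀ ≠ 0 := by
    rw [Zq]
    norm_cast
    exact (sum_pos (fun x _ => pow_pos hq0 _) ⟨z, by simp [b₀]⟩).ne'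
  have hsum : Zq I q b₀ • wordProd (siteOps dd ee I q u) (List.finRange I) z =
      (q : ℂ) ^ invCount z • MIop dd ee I q b₀ u := by
    rw [Zq, MIop_eq_sum_filter, sum_smul, smul_sum]
    exact sum_congr rfl fun z' hz' => smul_wordProd_siteOps_eq hq0 hde hu (mem_filter.1 hz').2.symm
  rw [sum_eq_single b₀ (fun b _ hb => by rw [hatPiMat, if_neg (fun h => hb (Fin.ext h.symm)),
    zero_smul]) (by simp), hatPiMat, if_pos rfl, div_eq_inv_mul, mul_smul, ← hsum,
    inv_smul_smul₀ hZ]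

end Fusion

lemma sum_firstHalf_secondHalf {M : Type*} [AddCommMonoid M] {I : ℕ}
    (f : (Fin I → Fin 2) → (Fin I → Fin 2) → M) :
    ∑ w, f (firstHalf w) (secondHalf w) = ∑ z₁, ∑ z₂, f z₁ z₂ := by
  rw [← Fintype.sum_prod_type']
  refine Fintype.sum_equiv ((Equiv.arrowCongr (finSumFinEquiv.trans (finCongr (two_mul I).symm))
    (Equiv.refl _)).symm.trans (Equiv.sumArrowEquivProdArrow _ _ _)) _ _ fun w => ?_
  congr 1
  funext k
  exact congrArg w (Fin.ext (by simp [add_comm]))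

section Bulk

variable {A : Type*} [Ring A] [Algebra ℂ A] {dd ee : A} {I : ℕ} {q : ℝ}

def leftSite (I : ℕ) (k : Fin I) : Fin (2 * I) := ⟨k, by omega⟩

def rightSite (I : ℕ) (k : Fin I) : Fin (2 * I) := ⟨k + I, by omega⟩

def leftSites (I : ℕ) : List (Fin (2 * I)) := (List.finRange I).map (leftSite I)

def rightSites (I : ℕ) : List (Fin (2 * I)) := (List.finRange I).map (rightSite I)

lemma nodup_leftSites_append_rightSites : (leftSites I ++ rightSites I).Nodup := by
  refine List.nodup_append.2 ⟨(List.nodup_finRange I).map fun a b h => ?_,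
    (List.nodup_finRange I).map fun a b h => ?_, ?_⟩
  · simpa [leftSite, Fin.ext_iff] using h
  · simpa [rightSite, Fin.ext_iff] using h
  · simp only [leftSites, rightSites, List.mem_map, List.mem_finRange, true_and]
    rintro _ ⟨k, rfl⟩ _ ⟨l, rfl⟩ h
    simp only [leftSite, rightSite, Fin.ext_iff] at h
    omega

variable (dd ee) in
noncomputable def bulkSiteOps (I : ℕ) (q : ℝ) (x y : ℂ) (s : Fin (2 * I)) : Fin 2 → A :=
  if h : (s : ℕ) < I then siteOps dd ee I q x ⟨s, h⟩ else siteOps dd ee I q y ⟨s - I, by omega⟩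

lemma bulkSiteOps_leftSite (x y : ℂ) (k : Fin I) :
    bulkSiteOps dd ee I q x y (leftSite I k) = siteOps dd ee I q x k := by
  simp [bulkSiteOps, leftSite]

lemma bulkSiteOps_rightSite (x y : ℂ) (k : Fin I) :
    bulkSiteOps dd ee I q x y (rightSite I k) = siteOps dd ee I q y k := by
  simp [bulkSiteOps, rightSite]

lemma wordProd_bulkSiteOps_leftSites (x y : ℂ) (w : Fin (2 * I) → Fin 2) :
    wordProd (bulkSiteOps dd ee I q x y) (leftSites I) w =
      wordProd (siteOps dd ee I q x) (List.finRange I) (firstHalf w) := by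
  rw [leftSites, wordProd_map, funext (bulkSiteOps_leftSite x y)]
  rfl

lemma wordProd_bulkSiteOps_rightSites (x y : ℂ) (w : Fin (2 * I) → Fin 2) :
    wordProd (bulkSiteOps dd ee I q x y) (rightSites I) w =
      wordProd (siteOps dd ee I q y) (List.finRange I) (secondHalf w) := by
  rw [rightSites, wordProd_map, funext (bulkSiteOps_rightSite x y)]
  rfl

lemma PiPiMat_mulVec_wordProd (x y : ℂ) (c d : Fin (I + 1)) :
    ((PiPiMat I).map (algebraMap ℂ A) *ᵥ
        wordProd (bulkSiteOps dd ee I q x y) (rightSites I ++ leftSites I)) (d, c) =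
      MIop dd ee I q c y * MIop dd ee I q d x := by
  rw [mulVec_map_algebraMap_apply, MIop_eq_sum_PiMat, MIop_eq_sum_PiMat, sum_mul_sum, sum_comm]
  simp only [PiPiMat, wordProd_append, wordProd_bulkSiteOps_leftSites,
    wordProd_bulkSiteOps_rightSites]
  refine (sum_firstHalf_secondHalf fun z₁ z₂ => (PiMat I d z₁ * PiMat I c z₂) •
    (wordProd (siteOps dd ee I q y) (List.finRange I) z₂ *
      wordProd (siteOps dd ee I q x) (List.finRange I) z₁)).trans ?_
  simp only [smul_mul_smul_comm, mul_comm (PiMat I d _)]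

lemma Rring_eq_prod (q u : ℂ) :
    Rring I q u = ((rightSites I).reverse.map fun t => ((leftSites I).map fun s =>
      emb2 s t (Rmat q (u * q ^ ((s : ℤ) + I - t)))).prod).prod := by
  rw [Rring, rightSites, ← List.map_reverse, List.finRange_reverse, List.map_map, List.map_map]
  refine congrArg List.prod (List.map_congr_left fun a _ => ?_)
  simp only [comp_apply, leftSites, List.map_map]
  refine congrArg List.prod (List.map_congr_left fun b _ => ?_)
  have ht : (⟨2 * I - 1 - a, by omega⟩ : Fin (2 * I)) = rightSite I a.rev :=
    Fin.ext (by simp [rightSite]; omega)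
  simp only [comp_apply, ht, leftSite, rightSite, Fin.val_rev]
  congr 4
  push_cast
  omega

variable (hq0 : 0 < q) (hde : dd * ee - (q : ℂ) • (ee * dd) = (1 - (q : ℂ)) • (1 : A))
  {x y : ℂ} (hx : x ≠ 0) (hy : y ≠ 0)
include hq0 hde hx hy

lemma Rring_mulVec_wordProd
    (hreg : ∀ m : ℤ, -(I : ℤ) ≤ m → m ≤ (I : ℤ) → (x / y) * (q : ℂ) ^ m ≠ 1) :
    (Rring I q (x / y)).map (algebraMap ℂ A) *ᵥ
        wordProd (bulkSiteOps dd ee I q x y) (leftSites I ++ rightSites I) =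
      wordProd (bulkSiteOps dd ee I q x y) (rightSites I ++ leftSites I) := by
  rw [Rring_eq_prod]
  refine mulVec_prod_prod_emb2_wordProd _ _ _ _ (fun s hs t ht => ?_) []
    nodup_leftSites_append_rightSites
  obtain ⟨k, -, rfl⟩ := List.mem_map.1 hs
  obtain ⟨l, -, rfl⟩ := List.mem_map.1 ht
  have hkl : ((leftSite I k : ℕ) : ℤ) + I - (rightSite I l : ℕ) = (k : ℤ) - l := by
    simp only [leftSite, rightSite]
    push_cast
    ring
  rw [hkl, bulkSiteOps_leftSite, bulkSiteOps_rightSite]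
  refine zfRelation_Mop hde (sitePoint_ne_zero hq0 hy l) (sitePoint_ne_zero hq0 hx k)
    (sitePoint_eq_mul hq0 x hy k l) (sub_ne_zero.2 (Ne.symm ?_))
  convert hreg ((k : ℤ) - l + 1) (by omega) (by omega) using 1
  rw [zpow_add_one₀ (Complex.ofReal_ne_zero.2 hq0.ne')]
  ring

lemma wordProd_eq_hatPiPiMat_mulVec :
    wordProd (bulkSiteOps dd ee I q x y) (leftSites I ++ rightSites I) =
      (hatPiPiMat I q).map (algebraMap ℂ A) *ᵥ
        fun p => MIop dd ee I q p.1 x * MIop dd ee I q p.2 y := by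
  funext w
  rw [mulVec_map_algebraMap_apply, wordProd_append, wordProd_bulkSiteOps_leftSites,
    wordProd_bulkSiteOps_rightSites, wordProd_siteOps_eq_sum_hatPiMat hq0 hde hx,
    wordProd_siteOps_eq_sum_hatPiMat hq0 hde hy, sum_mul_sum, Fintype.sum_prod_type]
  simp only [hatPiPiMat, smul_mul_smul_comm]

end Bulk

theorem fused_ZF_general {A : Type*} [Ring A] [Algebra ℂ A]
    (I : ℕ) (q : ℝ) (hq0 : 0 < q)
    (dd ee : A)
    (hde : dd * ee - (q : ℂ) • (ee * dd) = (1 - (q : ℂ)) • (1 : A))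
    (x y : ℂ) (hx : x ≠ 0) (hy : y ≠ 0)
    (hreg : ∀ m : ℤ, -(I : ℤ) ≤ m → m ≤ (I : ℤ) → (x / y) * (q : ℂ) ^ m ≠ 1)
    (c d : Fin (I + 1)) :
    MIop dd ee I q (c : ℕ) y * MIop dd ee I q (d : ℕ) x =
      ∑ a : Fin (I + 1), ∑ b : Fin (I + 1),
        RI I (q : ℂ) (x / y) (d, c) (b, a) •
          (MIop dd ee I q (b : ℕ) x * MIop dd ee I q (a : ℕ) y) := by
  calc MIop dd ee I q c y * MIop dd ee I q d x
      = ((PiPiMat I).map (algebraMap ℂ A) *ᵥ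
          wordProd (bulkSiteOps dd ee I q x y) (rightSites I ++ leftSites I)) (d, c) :=
        (PiPiMat_mulVec_wordProd x y c d).symm
    _ = ((RI I q (x / y)).map (algebraMap ℂ A) *ᵥ
          fun p => MIop dd ee I q p.1 x * MIop dd ee I q p.2 y) (d, c) := by
        rw [← Rring_mulVec_wordProd hq0 hde hx hy hreg,
          wordProd_eq_hatPiPiMat_mulVec hq0 hde hx hy, Matrix.mulVec_mulVec,
          Matrix.mulVec_mulVec, ← Matrix.map_mul, ← Matrix.map_mul, RI]
    _ = _ := by rw [mulVec_map_algebraMap_apply, Fintype.sum_prod_type, sum_comm]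

/-- **Fused Zamolodchikov–Faddeev relation**: if `𝐝𝐞 − q𝐞𝐝 = (1−q)·1`, then for all
nonzero `x, y` with `x/y` avoiding the singular points and all `0 ≤ c, d ≤ I`,
`M^I_c(y) M^I_d(x) = Σ_{a,b=0}^{I} R^I(x/y)_{b,a}^{d,c} M^I_b(x) M^I_a(y)`. -/
theorem fused_ZF {A : Type*} [Ring A] [Algebra ℂ A]
    (I : ℕ) (hI : 1 ≤ I) (q : ℝ) (hq0 : 0 < q) (hq1 : q < 1)
    (dd ee : A)
    (hde : dd * ee - (q : ℂ) • (ee * dd) = (1 - (q : ℂ)) • (1 : A))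
    (x y : ℂ) (hx : x ≠ 0) (hy : y ≠ 0)
    (hreg : ∀ m : ℤ, -(I : ℤ) ≤ m → m ≤ (I : ℤ) → (x / y) * (q : ℂ) ^ m ≠ 1)
    (c d : Fin (I + 1)) :
    MIop dd ee I q (c : ℕ) y * MIop dd ee I q (d : ℕ) x =
      ∑ a : Fin (I + 1), ∑ b : Fin (I + 1),
        RI I (q : ℂ) (x / y) (d, c) (b, a) •
          (MIop dd ee I q (b : ℕ) x * MIop dd ee I q (a : ℕ) y) :=
  fused_ZF_general I q hq0 dd ee hde x y hx hy hreg c d
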